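/- arXiv:1403.5921 — 2 statements merged into one kernel-verified Lean document; each statement's English description precedes it below -/
import Mathlib

section
/- Let B = S/(f_1,...,f_n), l ∈ S_1 regular on B, J = (f_0,...,f_n). If the multiplication map f_0 : (B/(l))_{e-d_0} → (B/(l))_e is injective for some e, then the multiplication map l : (S/J)_{e-1} → (S/J)_e is injective. -/
open MvPolynomial Polynomial

attribute [local instance] MvPolynomial.gradedAlgebra

/-- The dimension over `K` of the degree `p` graded piece of `S ⧸ J`. -/
noncomputable def hilbFn {n : ℕ} {K : Type} [Field K]
    (J : Ideal (MvPolynomial (Fin (n + 1)) K)) (p : ℕ) : ℕ :=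
  Module.finrank K
    ((homogeneousSubmodule (Fin (n + 1)) K p).map (Ideal.Quotient.mkₐ K J).toLinearMap)

/-- The Hilbert series of `S ⧸ J` as a power series over `ℤ`. -/
noncomputable def hilbSeries {n : ℕ} {K : Type} [Field K]
    (J : Ideal (MvPolynomial (Fin (n + 1)) K)) : PowerSeries ℤ :=
  PowerSeries.mk fun p => (hilbFn J p : ℤ)

/-- The saturation `(J : 𝔪^∞)` of `J` with respect to the irrelevant ideal
`𝔪 = (x_0, …, x_n)`. -/
noncomputable def idealSaturation {n : ℕ} {K : Type} [Field K]
    (J : Ideal (MvPolynomial (Fin (n + 1)) K)) : Ideal (MvPolynomial (Fin (n + 1)) K) :=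
  ⨆ k : ℕ, J.colon (((Ideal.span (Set.range (X : Fin (n + 1) → MvPolynomial (Fin (n + 1)) K))) ^ k : Ideal (MvPolynomial (Fin (n + 1)) K)) : Set (MvPolynomial (Fin (n + 1)) K))

/-- The degree `z` graded piece of `S ⧸ W`, for an integer `z` (zero in negative degrees). -/
noncomputable def quotPieceZ {n : ℕ} {K : Type} [Field K]
    (W : Ideal (MvPolynomial (Fin (n + 1)) K)) (z : ℤ) :
    Submodule K (MvPolynomial (Fin (n + 1)) K ⧸ W) :=
  if 0 ≤ z then
    (homogeneousSubmodule (Fin (n + 1)) K z.toNat).map (Ideal.Quotient.mkₐ K W).toLinearMap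
  else ⊥

/-! Write `I = (f₁, …, fₙ)` and `W = I + (l)`. If `l g ∈ J = I + (f₀)` with `g` of degree `e - 1`,
taking the degree `e` component gives `l g ≡ h f₀ (mod I)` with `h` of degree `e - d₀`. Then
`f₀ h ∈ W`, so `h ∈ W` by hypothesis, say `h ≡ c l (mod I)`; hence `l (g - c f₀) ∈ I`, and since
`l` is a nonzerodivisor modulo `I`, `g ∈ J`. -/

-- `e - d` is truncated; when `e < d` the degree `e` part of `I + (f)` lies in `I`, witnessed by `h = 0`.
theorem Ideal.exists_homogeneous_sub_mul_mem_of_mem_span_singleton_sup {R A : Type*}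
    [CommSemiring R] [CommRing A] [Algebra R A] (𝒜 : ℕ → Submodule R A) [GradedAlgebra 𝒜]
    {I : Ideal A} (hI : I.IsHomogeneous 𝒜) {f x : A} {d e : ℕ} (hf : f ∈ 𝒜 d) (hx : x ∈ 𝒜 e)
    (hxI : x ∈ Ideal.span {f} ⊔ I) : ∃ h ∈ 𝒜 (e - d), x - h * f ∈ I ∧ (e < d → h = 0) := by
  classical
  obtain ⟨a, r, hr, rfl⟩ := Ideal.mem_span_singleton_sup.1 hxI
  have hdecomp : a * f + r = (DirectSum.decompose 𝒜 (a * f) e : A) + DirectSum.decompose 𝒜 r e := by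
    rw [← Submodule.coe_add, ← DirectSum.add_apply, ← DirectSum.decompose_add,
      DirectSum.decompose_of_mem_same 𝒜 hx]
  rw [DirectSum.coe_decompose_mul_of_right_mem 𝒜 e hf] at hdecomp
  refine ⟨if d ≤ e then DirectSum.decompose 𝒜 a (e - d) else 0, ?_, ?_, fun hed => if_neg hed.not_ge⟩
  · split_ifs
    exacts [SetLike.coe_mem _, zero_mem _]
  · rw [hdecomp, ite_mul, zero_mul, add_sub_cancel_left]
    exact hI e hr

theorem Ideal.mem_of_mul_mem_of_mk_mem_nonZeroDivisors {A : Type*} [CommRing A] {I : Ideal A}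
    {l y : A} (hl : Ideal.Quotient.mk I l ∈ nonZeroDivisors (A ⧸ I)) (hly : l * y ∈ I) : y ∈ I := by
  rw [← Ideal.Quotient.eq_zero_iff_mem] at hly ⊢
  exact mem_nonZeroDivisors_iff_left.1 hl _ (by rwa [map_mul] at hly)

theorem Ideal.mem_span_singleton_sup_of_mul_sub_mul_mem {A : Type*} [CommRing A] {I : Ideal A}
    {l f g h : A} (hl : Ideal.Quotient.mk I l ∈ nonZeroDivisors (A ⧸ I))
    (hgh : l * g - h * f ∈ I) (hh : h ∈ Ideal.span {l} ⊔ I) : g ∈ Ideal.span {f} ⊔ I := by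
  obtain ⟨c, y, hy, rfl⟩ := Ideal.mem_span_singleton_sup.1 hh
  have hg : g - c * f ∈ I := by
    refine Ideal.mem_of_mul_mem_of_mk_mem_nonZeroDivisors hl ?_
    have : l * (g - c * f) = (l * g - (c * l + y) * f) + f * y := by ring
    rw [this]
    exact add_mem hgh (I.mul_mem_left f hy)
  exact Ideal.mem_span_singleton_sup.2 ⟨c, _, hg, by ring⟩

theorem mem_quotPieceZ_natCast_iff {n : ℕ} {K : Type} [Field K] {W : Ideal (MvPolynomial (Fin (n + 1)) K)} {k : ℕ}
    {x : MvPolynomial (Fin (n + 1)) K ⧸ W} :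
    x ∈ quotPieceZ W k ↔ ∃ g, g.IsHomogeneous k ∧ Ideal.Quotient.mk W g = x := by
  rw [quotPieceZ, if_pos (Int.natCast_nonneg k), Int.toNat_natCast]
  rfl

theorem mul_l_injective_of_mul_f0_injective_general {n : ℕ} {K : Type} [Field K]
    (f : Fin (n + 1) → MvPolynomial (Fin (n + 1)) K) (d : Fin (n + 1) → ℕ)
    (hhom : ∀ i, (f i).IsHomogeneous (d i))
    (l : MvPolynomial (Fin (n + 1)) K) (hl : l.IsHomogeneous 1)
    (hlreg : Ideal.Quotient.mk (Ideal.span (Set.range fun i : Fin n => f i.succ)) l ∈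
      nonZeroDivisors
        (MvPolynomial (Fin (n + 1)) K ⧸ Ideal.span (Set.range fun i : Fin n => f i.succ)))
    (e : ℕ)
    -- multiplication by `f₀ : (B/(l))_{e-d₀} → (B/(l))_e` is injective
    (hinj : ∀ x ∈ quotPieceZ
        (Ideal.span (Set.range fun i : Fin n => f i.succ) ⊔ Ideal.span {l}) ((e : ℤ) - d 0),
      Ideal.Quotient.mk
          (Ideal.span (Set.range fun i : Fin n => f i.succ) ⊔ Ideal.span {l}) (f 0) * x = 0 →
        x = 0) :
    -- then multiplication by `l : (S/J)_{e-1} → (S/J)_e` is injective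
    ∀ x ∈ quotPieceZ (Ideal.span (Set.range f)) ((e : ℤ) - 1),
      Ideal.Quotient.mk (Ideal.span (Set.range f)) l * x = 0 → x = 0 := by
  set I := Ideal.span (Set.range fun i : Fin n => f i.succ)
  have hJ : Ideal.span (Set.range f) = Ideal.span {f 0} ⊔ I := by
    rw [Fin.range_fin_succ, Ideal.span_insert]
    rfl
  have hI : I.IsHomogeneous (homogeneousSubmodule (Fin (n + 1)) K) :=
    Ideal.homogeneous_span _ _ (by rintro _ ⟨i, rfl⟩; exact ⟨d i.succ, hhom i.succ⟩)
  intro x hx hlx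
  obtain _ | e := e
  · simpa [quotPieceZ] using hx
  obtain ⟨g, hg, rfl⟩ := mem_quotPieceZ_natCast_iff.1 (by simpa using hx)
  rw [← map_mul, Ideal.Quotient.eq_zero_iff_mem, hJ] at hlx
  have hlg : l * g ∈ homogeneousSubmodule (Fin (n + 1)) K (e + 1) := by
    simpa [add_comm] using hl.mul hg
  obtain ⟨h, hh, hlgh, hh0⟩ :=
    I.exists_homogeneous_sub_mul_mem_of_mem_span_singleton_sup _ hI (hhom 0) hlg hlx
  have hhW : h ∈ Ideal.span {l} ⊔ I := by
    rw [sup_comm, ← Ideal.Quotient.eq_zero_iff_mem]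
    refine hinj _ ?_ ?_
    · by_cases hde : d 0 ≤ e + 1
      · rw [← Nat.cast_sub hde]
        exact mem_quotPieceZ_natCast_iff.2 ⟨h, hh, rfl⟩
      · rw [hh0 (not_le.1 hde), map_zero]
        exact zero_mem _
    · rw [← map_mul, Ideal.Quotient.eq_zero_iff_mem]
      have : f 0 * h = l * g - (l * g - h * f 0) := by ring
      rw [this]
      exact sub_mem (Ideal.mul_mem_right _ _ (Ideal.mem_sup_right (Ideal.mem_span_singleton_self l)))
        (Ideal.mem_sup_left hlgh)
  rw [Ideal.Quotient.eq_zero_iff_mem, hJ]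
  exact Ideal.mem_span_singleton_sup_of_mul_sub_mul_mem hlreg hlgh hhW

theorem mul_l_injective_of_mul_f0_injective {n : ℕ} {K : Type} [Field K] [CharZero K]
    (f : Fin (n + 1) → MvPolynomial (Fin (n + 1)) K) (d : Fin (n + 1) → ℕ)
    (hhom : ∀ i, (f i).IsHomogeneous (d i))
    (hreg : RingTheory.Sequence.IsRegular (MvPolynomial (Fin (n + 1)) K)
      (List.ofFn fun i : Fin n => f i.succ))
    (l : MvPolynomial (Fin (n + 1)) K) (hl : l.IsHomogeneous 1)
    (hlreg : Ideal.Quotient.mk (Ideal.span (Set.range fun i : Fin n => f i.succ)) l ∈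
      nonZeroDivisors
        (MvPolynomial (Fin (n + 1)) K ⧸ Ideal.span (Set.range fun i : Fin n => f i.succ)))
    (e : ℕ)
    -- multiplication by `f₀ : (B/(l))_{e-d₀} → (B/(l))_e` is injective
    (hinj : ∀ x ∈ quotPieceZ
        (Ideal.span (Set.range fun i : Fin n => f i.succ) ⊔ Ideal.span {l}) ((e : ℤ) - d 0),
      Ideal.Quotient.mk
          (Ideal.span (Set.range fun i : Fin n => f i.succ) ⊔ Ideal.span {l}) (f 0) * x = 0 →
        x = 0) :
    -- then multiplication by `l : (S/J)_{e-1} → (S/J)_e` is injective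
    ∀ x ∈ quotPieceZ (Ideal.span (Set.range f)) ((e : ℤ) - 1),
      Ideal.Quotient.mk (Ideal.span (Set.range f)) l * x = 0 → x = 0 :=
  mul_l_injective_of_mul_f0_injective_general f d hhom l hl hlreg e hinj
end

section
/- Let f ∈ S = K[x_0,...,x_n] be homogeneous of degree d defining a hypersurface V with only isolated singularities, and suppose f_0 lies in the ideal generated by the other partial derivatives f_1,...,f_n of f. Then, after a linear change of coordinates, f is a polynomial in x_1,...,x_n only; equivalently, f_0 lies in the K-vector space spanned by f_1,...,f_n. -/
open MvPolynomial Polynomial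

attribute [local instance] MvPolynomial.gradedAlgebra

/-! Write `f₀ = ∑ gᵢ fᵢ`. All `fᵢ` are homogeneous of degree `deg f - 1`, so taking homogeneous
components of that degree keeps only the constant terms `cᵢ` of the `gᵢ`: `f₀ = ∑ cᵢ fᵢ`.
For the shear `φ : x_{i+1} ↦ x_{i+1} - cᵢ x₀`, the chain rule gives
`∂₀ (φ f) = φ (f₀ - ∑ cᵢ fᵢ) = 0`, and in characteristic zero a polynomial with vanishing `∂₀`
does not involve `x₀`. -/

namespace MvPolynomial

variable {σ R : Type*}

section CommSemiring

variable [CommSemiring R]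

theorem homogeneousComponent_mul_of_isHomogeneous {F : MvPolynomial σ R} {e : ℕ}
    (hF : F.IsHomogeneous e) (g : MvPolynomial σ R) :
    homogeneousComponent e (g * F) = C (coeff 0 g) * F := by
  classical
  conv_lhs => rw [← sum_homogeneousComponent g, Finset.sum_mul, map_sum]
  have (k : ℕ) : homogeneousComponent e (homogeneousComponent k g * F) =
      if k = 0 then homogeneousComponent 0 g * F else 0 := by
    rw [homogeneousComponent_of_mem ((homogeneousComponent_isHomogeneous k g).mul hF)]
    rcases k with _ | k <;> simp
  simp [this, homogeneousComponent_zero]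

theorem mem_span_of_mem_ideal_span_of_isHomogeneous {ι : Type*} [Fintype ι]
    {v : ι → MvPolynomial σ R} {p : MvPolynomial σ R} {e : ℕ}
    (hv : ∀ i, (v i).IsHomogeneous e) (hp : p.IsHomogeneous e)
    (h : p ∈ Ideal.span (Set.range v)) : p ∈ Submodule.span R (Set.range v) := by
  obtain ⟨g, rfl⟩ := Ideal.mem_span_range_iff_exists_fun.mp h
  rw [Submodule.mem_span_range_iff_exists_fun]
  refine ⟨fun i => coeff 0 (g i), ?_⟩
  rw [← homogeneousComponent_eq_self hp, map_sum]
  simp [homogeneousComponent_mul_of_isHomogeneous (hv _), smul_eq_C_mul]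

theorem pderiv_aeval [Fintype σ] (u : σ → MvPolynomial σ R) (j : σ) (p : MvPolynomial σ R) :
    pderiv j (aeval u p) = ∑ i, aeval u (pderiv i p) * pderiv j (u i) := by
  classical
  induction p using MvPolynomial.induction_on with
  | C a => simp
  | add p q hp hq => simp only [map_add, hp, hq, add_mul, Finset.sum_add_distrib]
  | mul_X p k hp =>
    simp only [map_mul, aeval_X, pderiv_mul, hp, pderiv_X, Pi.single_apply, mul_ite, mul_one,
      mul_zero, map_add, add_mul, Finset.sum_add_distrib, Finset.sum_mul]
    simp [mul_right_comm, apply_ite (bind₁ u), ite_mul]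

theorem notMem_vars_of_pderiv_eq_zero [IsAddTorsionFree R] {p : MvPolynomial σ R} {i : σ}
    (h : pderiv i p = 0) : i ∉ p.vars := by
  classical
  rw [mem_vars_iff_mem_support]
  rintro ⟨m, hm, hi⟩
  have hle : Finsupp.single i 1 ≤ m :=
    Finsupp.single_le_iff.mpr (Nat.one_le_iff_ne_zero.mpr (Finsupp.mem_support_iff.mp hi))
  have hcoeff := coeff_pderiv (i := i) p (m - Finsupp.single i 1)
  rw [h, coeff_zero, tsub_add_cancel_of_le hle, Finsupp.tsub_apply, Finsupp.single_eq_same,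
    ← Nat.cast_succ, mul_comm, ← nsmul_eq_mul] at hcoeff
  exact mem_support_iff.mp hm ((nsmul_eq_zero_iff_right (Nat.succ_ne_zero _)).mp hcoeff.symm)

theorem exists_rename_succ_eq_of_pderiv_zero_eq_zero [IsAddTorsionFree R] {n : ℕ}
    {p : MvPolynomial (Fin (n + 1)) R} (h : pderiv 0 p = 0) :
    ∃ q : MvPolynomial (Fin n) R, rename Fin.succ q = p :=
  exists_rename_eq_of_vars_subset_range p _ (Fin.succ_injective n) fun _ hj =>
    Fin.exists_succ_eq.mpr (ne_of_mem_of_not_mem hj (notMem_vars_of_pderiv_eq_zero h))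

end CommSemiring

section Shear

variable [CommRing R] {n : ℕ}

noncomputable def shear (c : Fin n → R) : Fin (n + 1) → MvPolynomial (Fin (n + 1)) R :=
  Fin.cons (X 0) fun i => X i.succ - C (c i) * X 0

theorem isHomogeneous_shear (c : Fin n → R) (j : Fin (n + 1)) : (shear c j).IsHomogeneous 1 := by
  cases j using Fin.cases with
  | zero => exact isHomogeneous_X R 0
  | succ i => exact (isHomogeneous_X R _).sub ((isHomogeneous_X R 0).C_mul (c i))

theorem aeval_shear_aeval_shear_neg (c : Fin n → R) (p : MvPolynomial (Fin (n + 1)) R) :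
    aeval (shear c) (aeval (shear (-c)) p) = p := by
  have hX : (fun j => aeval (shear c) (shear (-c) j)) = X := by
    ext1 j
    cases j using Fin.cases <;> simp [shear]
  rw [← AlgHom.comp_apply, comp_aeval, hX, aeval_X_left_apply]

theorem bijective_aeval_shear (c : Fin n → R) :
    Function.Bijective (aeval (R := R) (shear c)) := by
  refine ⟨Function.LeftInverse.injective (g := aeval (shear (-c))) fun p => ?_,
    fun p => ⟨_, aeval_shear_aeval_shear_neg c p⟩⟩
  simpa using aeval_shear_aeval_shear_neg (-c) p

theorem pderiv_zero_aeval_shear (c : Fin n → R) (p : MvPolynomial (Fin (n + 1)) R) :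
    pderiv 0 (aeval (shear c) p) =
      aeval (shear c) (pderiv 0 p - ∑ i, C (c i) * pderiv i.succ p) := by
  rw [pderiv_aeval, Fin.sum_univ_succ]
  simp [shear, pderiv_X_of_ne (Fin.succ_ne_zero _), sub_eq_add_neg, mul_comm]

end Shear

end MvPolynomial

theorem cone_over_smooth_hypersurface_general {n : ℕ} {K : Type} [Field K] [CharZero K]
    (f : MvPolynomial (Fin (n + 1)) K) (dd : ℕ) (hf : f.IsHomogeneous dd)
    -- `f₀` lies in the ideal generated by the other partial derivatives
    (hmem : pderiv 0 f ∈ Ideal.span (Set.range fun i : Fin n => pderiv i.succ f)) :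
    -- `f₀` lies in the `K`-vector space spanned by `f_1, …, f_n`, and after a linear
    -- change of coordinates `f` is a polynomial in `x_1, …, x_n` only
    pderiv 0 f ∈ Submodule.span K (Set.range fun i : Fin n => pderiv i.succ f) ∧
    ∃ lin : Fin (n + 1) → MvPolynomial (Fin (n + 1)) K,
      (∀ i, (lin i).IsHomogeneous 1) ∧
      Function.Bijective (MvPolynomial.aeval (R := K) lin) ∧
      ∃ g : MvPolynomial (Fin n) K,
        MvPolynomial.rename (Fin.succ : Fin n → Fin (n + 1)) g = MvPolynomial.aeval lin f := by
  have hspan := mem_span_of_mem_ideal_span_of_isHomogeneous (fun _ => hf.pderiv) hf.pderiv hmem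
  obtain ⟨c, hc⟩ := (Submodule.mem_span_range_iff_exists_fun K).mp hspan
  refine ⟨hspan, shear c, isHomogeneous_shear c, bijective_aeval_shear c,
    exists_rename_succ_eq_of_pderiv_zero_eq_zero ?_⟩
  rw [pderiv_zero_aeval_shear, ← hc]
  simp [MvPolynomial.smul_eq_C_mul]

theorem cone_over_smooth_hypersurface {n : ℕ} {K : Type} [Field K] [CharZero K]
    (f : MvPolynomial (Fin (n + 1)) K) (dd : ℕ) (hf : f.IsHomogeneous dd)
    -- `V : f = 0` has only isolated singularities, i.e. `dim S/J_f = 1`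
    (hdim : ringKrullDim (MvPolynomial (Fin (n + 1)) K ⧸
      Ideal.span (Set.range fun i : Fin (n + 1) => pderiv i f)) = 1)
    -- `f₀` lies in the ideal generated by the other partial derivatives
    (hmem : pderiv 0 f ∈ Ideal.span (Set.range fun i : Fin n => pderiv i.succ f)) :
    -- `f₀` lies in the `K`-vector space spanned by `f_1, …, f_n`, and after a linear
    -- change of coordinates `f` is a polynomial in `x_1, …, x_n` only
    pderiv 0 f ∈ Submodule.span K (Set.range fun i : Fin n => pderiv i.succ f) ∧
    ∃ lin : Fin (n + 1) → MvPolynomial (Fin (n + 1)) K,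
      (∀ i, (lin i).IsHomogeneous 1) ∧
      Function.Bijective (MvPolynomial.aeval (R := K) lin) ∧
      ∃ g : MvPolynomial (Fin n) K,
        MvPolynomial.rename (Fin.succ : Fin n → Fin (n + 1)) g = MvPolynomial.aeval lin f :=
  cone_over_smooth_hypersurface_general f dd hf hmem
end
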